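/- If μ_i > 0 for all i and ν_j > 0 for all j, then any maximizer P^max of H over the transportation polytope with marginals μ, ν satisfies P^max_{ij} > 0 for all i, j; in particular there exists η > 0 with P^max_{ij} ≥ η for all i, j. -/

import Mathlib

/-!
For `P` in the transportation polytope, concavity of `negMulLog` bounds `H P` by the value of
`H` at the product coupling `μ ⊗ ν = outerProd μ ν` plus the tangent term at `μ ⊗ ν`, strictly
unless `P = μ ⊗ ν`. Since `log (μ i * ν j)` splits as a function of `i` plus a function of `j`,
the tangent term only sees the marginals of `P`, so it vanishes. Hence `μ ⊗ ν` is the unique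
maximizer, and its entries `μ i * ν j` are positive.
-/

/-- The transportation polytope with marginals `μ` and `ν`. -/
def transPoly {n m : ℕ} (μ : Fin n → ℝ) (ν : Fin m → ℝ) : Set (Fin n → Fin m → ℝ) :=
  {P | (∀ i j, 0 ≤ P i j) ∧ (∀ i, ∑ j, P i j = μ i) ∧ (∀ j, ∑ i, P i j = ν j)}

/-- Shannon entropy of a matrix with the convention `0 * log 0 = 0`. -/
noncomputable def shannonH {n m : ℕ} (P : Fin n → Fin m → ℝ) : ℝ :=
  ∑ i, ∑ j, Real.negMulLog (P i j)

open Real Finset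

lemma Real.negMulLog_lt_tangent {p q : ℝ} (hp : 0 ≤ p) (hq : 0 < q) (hpq : p ≠ q) :
    negMulLog p < negMulLog q + (-log q - 1) * (p - q) := by
  have hdecomp : negMulLog p = q * negMulLog (p / q) - p * log q := by
    have h := negMulLog_mul (p / q) q
    rw [div_mul_cancel₀ p hq.ne'] at h
    rw [h]
    simp only [negMulLog]
    field_simp
    ring
  have hlt : negMulLog (p / q) < 1 - p / q :=
    negMulLog_lt_one_sub_self (div_nonneg hp hq.le) (by rwa [ne_eq, div_eq_one_iff_eq hq.ne'])
  have hscaled := mul_lt_mul_of_pos_left hlt hq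
  rw [mul_sub, mul_div_cancel₀ p hq.ne'] at hscaled
  rw [hdecomp, show negMulLog q = -q * log q from rfl]
  linarith

lemma Real.negMulLog_le_tangent {p q : ℝ} (hp : 0 ≤ p) (hq : 0 < q) :
    negMulLog p ≤ negMulLog q + (-log q - 1) * (p - q) := by
  rcases eq_or_ne p q with rfl | hpq
  · simp
  · exact (negMulLog_lt_tangent hp hq hpq).le

section TransportationPolytope

variable {n m : ℕ} {μ : Fin n → ℝ} {ν : Fin m → ℝ}

def outerProd (μ : Fin n → ℝ) (ν : Fin m → ℝ) : Fin n → Fin m → ℝ := fun i j => μ i * ν j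

lemma outerProd_mem_transPoly (hμ : ∀ i, 0 ≤ μ i) (hν : ∀ j, 0 ≤ ν j)
    (hμ1 : ∑ i, μ i = 1) (hν1 : ∑ j, ν j = 1) : outerProd μ ν ∈ transPoly μ ν :=
  ⟨fun i j => mul_nonneg (hμ i) (hν j),
    fun i => by simp only [outerProd, ← mul_sum, hν1, mul_one],
    fun j => by simp only [outerProd, ← sum_mul, hμ1, one_mul]⟩

lemma sum_sum_add_mul_sub_eq_zero_of_mem_transPoly {P P' : Fin n → Fin m → ℝ}
    (hP : P ∈ transPoly μ ν) (hP' : P' ∈ transPoly μ ν) (a : Fin n → ℝ) (b : Fin m → ℝ) :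
    ∑ i, ∑ j, (a i + b j) * (P i j - P' i j) = 0 := by
  simp only [add_mul, sum_add_distrib]
  rw [sum_comm (f := fun i j => b j * (P i j - P' i j))]
  simp only [← mul_sum, sum_sub_distrib, hP.2.1, hP'.2.1, hP.2.2, hP'.2.2, sub_self, mul_zero,
    sum_const_zero, add_zero]

lemma shannonH_lt_shannonH_outerProd (hμ : ∀ i, 0 < μ i) (hν : ∀ j, 0 < ν j)
    (hμ1 : ∑ i, μ i = 1) (hν1 : ∑ j, ν j = 1) {P : Fin n → Fin m → ℝ}
    (hP : P ∈ transPoly μ ν) (hne : P ≠ outerProd μ ν) :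
    shannonH P < shannonH (outerProd μ ν) := by
  set Q := outerProd μ ν
  have hQ : Q ∈ transPoly μ ν :=
    outerProd_mem_transPoly (fun i => (hμ i).le) (fun j => (hν j).le) hμ1 hν1
  have hQpos : ∀ i j, 0 < Q i j := fun i j => mul_pos (hμ i) (hν j)
  obtain ⟨i₀, j₀, hij⟩ : ∃ i j, P i j ≠ Q i j := by
    by_contra! h
    exact hne (funext₂ h)
  have htangent : ∑ i, ∑ j, (-log (Q i j) - 1) * (P i j - Q i j) = 0 := by
    have hsplit : ∀ i j, -log (Q i j) - 1 = (-log (μ i) - 1) + -log (ν j) := fun i j => by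
      rw [show Q i j = μ i * ν j from rfl, log_mul (hμ i).ne' (hν j).ne']
      ring
    simp only [hsplit]
    exact sum_sum_add_mul_sub_eq_zero_of_mem_transPoly hP hQ _ _
  calc shannonH P = ∑ x : Fin n × Fin m, negMulLog (P x.1 x.2) :=
        (Fintype.sum_prod_type' _).symm
    _ < ∑ x : Fin n × Fin m, (negMulLog (Q x.1 x.2)
          + (-log (Q x.1 x.2) - 1) * (P x.1 x.2 - Q x.1 x.2)) :=
        sum_lt_sum (fun x _ => negMulLog_le_tangent (hP.1 x.1 x.2) (hQpos x.1 x.2))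
          ⟨(i₀, j₀), mem_univ _, negMulLog_lt_tangent (hP.1 i₀ j₀) (hQpos i₀ j₀) hij⟩
    _ = shannonH Q := by
        simp only [Fintype.sum_prod_type, sum_add_distrib, htangent, add_zero, shannonH]

end TransportationPolytope

lemma exists_pos_forall_le_of_forall_pos {ι : Type*} [Finite ι] {f : ι → ℝ}
    (hf : ∀ i, 0 < f i) : ∃ η > 0, ∀ i, η ≤ f i :=
  ((eventually_mem_nhdsWithin (s := Set.Ioi 0)).and (Filter.eventually_all.2 fun i =>
    (eventually_le_nhds (hf i)).filter_mono nhdsWithin_le_nhds)).exists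

/-- If the marginals are strictly positive, every maximizer of `H` over the
transportation polytope has strictly positive entries, and in particular is
bounded below by some `η > 0`. -/
theorem stmt8 {n m : ℕ} (μ : Fin n → ℝ) (ν : Fin m → ℝ)
    (hμ : ∀ i, 0 < μ i) (hν : ∀ j, 0 < ν j)
    (hμ1 : ∑ i, μ i = 1) (hν1 : ∑ j, ν j = 1)
    (Pmax : Fin n → Fin m → ℝ) (hPmax : Pmax ∈ transPoly μ ν)
    (hopt : ∀ P ∈ transPoly μ ν, shannonH P ≤ shannonH Pmax) :
    (∀ i j, 0 < Pmax i j) ∧ ∃ η > (0 : ℝ), ∀ i j, η ≤ Pmax i j := by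
  have hPmax_eq : Pmax = outerProd μ ν := by
    by_contra hne
    have hQ := outerProd_mem_transPoly (fun i => (hμ i).le) (fun j => (hν j).le) hμ1 hν1
    exact (hopt _ hQ).not_gt (shannonH_lt_shannonH_outerProd hμ hν hμ1 hν1 hPmax hne)
  have hpos : ∀ i j, 0 < Pmax i j := fun i j => hPmax_eq ▸ mul_pos (hμ i) (hν j)
  obtain ⟨η, hη, hle⟩ :=
    exists_pos_forall_le_of_forall_pos (f := fun x : Fin n × Fin m => Pmax x.1 x.2)
      fun x => hpos x.1 x.2
  exact ⟨hpos, η, hη, fun i j => hle (i, j)⟩
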